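/- Let (s_t)_{t≥0} be a semigroup of adjointable isometries on a Hilbert C*-module E. Set E_p := closure of ⋃_{t≥0} (s_t E)^⊥ and E_u := ⋂_{t≥0} s_t E. Then E_p^⊥ = E_u. -/

import Mathlib

open scoped RightActions
open MeasureTheory Filter Topology

noncomputable section

variable {A E : Type*} [CStarAlgebra A] [PartialOrder A] [StarOrderedRing A]
  [NormedAddCommGroup E] [NormedSpace ℂ E] [SMul A E] [CStarModule A E]

local notation "⟪" x ", " y "⟫" => (inner A x y : A)

variable (A) in
/-- Orthogonal complement of a subset of a Hilbert C*-module. -/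
def ortho (F : Set E) : Set E := {x : E | ∀ y ∈ F, ⟪y, x⟫ = 0}

/-! Complements turn the closure of the union into the intersection of the double complements
`(s_t E)^⊥⊥`, and `s_t E` is its own double complement because it is complemented:
`x - s_t s_t^* x ⊥ s_t E`. -/

omit [StarOrderedRing A] in
lemma inner_eq_zero_comm {x y : E} : ⟪x, y⟫ = 0 ↔ ⟪y, x⟫ = 0 := by
  rw [← CStarModule.star_inner y x, star_eq_zero]

lemma isClosed_setOf_inner_eq_zero (x : E) : IsClosed {y : E | ⟪y, x⟫ = 0} :=
  isClosed_eq (CStarModule.continuous_inner.comp (continuous_id.prodMk continuous_const))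
    continuous_const

lemma ortho_closure (F : Set E) : ortho A (closure F) = ortho A F := by
  refine Set.Subset.antisymm (fun x hx y hy => hx y (subset_closure hy)) fun x hx y hy => ?_
  exact closure_minimal (fun z hz => hx z hz) (isClosed_setOf_inner_eq_zero x) hy

omit [StarOrderedRing A] in
lemma ortho_iUnion {ι : Sort*} (F : ι → Set E) : ortho A (⋃ i, F i) = ⋂ i, ortho A (F i) := by
  ext x
  simp only [ortho, Set.mem_iUnion, Set.mem_iInter, Set.mem_ofPred_eq]
  exact ⟨fun hx i y hy => hx y ⟨i, hy⟩, fun hx y ⟨i, hy⟩ => hx i y hy⟩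

omit [StarOrderedRing A] in
lemma subset_ortho_ortho (F : Set E) : F ⊆ ortho A (ortho A F) :=
  fun x hx _ hy => inner_eq_zero_comm.mp (hy x hx)

section Isometry

variable {u v : E → E}

omit [StarOrderedRing A] in
lemma sub_apply_adjoint_mem_ortho_range (hiso : ∀ x y : E, ⟪u x, u y⟫ = ⟪x, y⟫)
    (hadj : ∀ x y : E, ⟪u x, y⟫ = ⟪x, v y⟫) (x : E) : x - u (v x) ∈ ortho A (Set.range u) := by
  rintro _ ⟨y, rfl⟩
  rw [CStarModule.inner_sub_right, hiso, hadj, sub_self]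

omit [StarOrderedRing A] in
lemma ortho_ortho_range_of_isometry (hiso : ∀ x y : E, ⟪u x, u y⟫ = ⟪x, y⟫)
    (hadj : ∀ x y : E, ⟪u x, y⟫ = ⟪x, v y⟫) : ortho A (ortho A (Set.range u)) = Set.range u := by
  refine Set.Subset.antisymm (fun x hx => ?_) (subset_ortho_ortho _)
  have hperp := sub_apply_adjoint_mem_ortho_range (A := A) hiso hadj x
  have hx' : ⟪x - u (v x), x⟫ = 0 := hx _ hperp
  have hp : ⟪x - u (v x), u (v x)⟫ = 0 := inner_eq_zero_comm.mp (hperp _ ⟨v x, rfl⟩)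
  have hself : ⟪x - u (v x), x - u (v x)⟫ = 0 := by
    rw [CStarModule.inner_sub_right, hx', hp, sub_self]
  exact ⟨v x, (sub_eq_zero.mp (CStarModule.inner_self.mp hself)).symm⟩

end Isometry

theorem orthocomplement_of_pure_part_is_unitary_part_general
    (s sa : ℝ → E →ₗ[ℂ] E)
    (hiso : ∀ t : ℝ, 0 ≤ t → ∀ x y : E, ⟪s t x, s t y⟫ = ⟪x, y⟫)
    (hadj : ∀ t : ℝ, 0 ≤ t → ∀ x y : E, ⟪s t x, y⟫ = ⟪x, sa t y⟫) :
    ortho A (closure (⋃ t ∈ Set.Ici (0 : ℝ), ortho A (Set.range (s t)))) =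
      ⋂ t ∈ Set.Ici (0 : ℝ), Set.range (s t) := by
  simp only [ortho_closure, ortho_iUnion]
  refine Set.iInter₂_congr fun t ht => ?_
  exact ortho_ortho_range_of_isometry (hiso t ht) (hadj t ht)

theorem orthocomplement_of_pure_part_is_unitary_part
    [CompleteSpace E]
    (s sa : ℝ → E →ₗ[ℂ] E)
    (hs0 : s 0 = LinearMap.id)
    (hsg : ∀ r t : ℝ, 0 ≤ r → 0 ≤ t → s (r + t) = (s r).comp (s t))
    (hiso : ∀ t : ℝ, 0 ≤ t → ∀ x y : E, ⟪s t x, s t y⟫ = ⟪x, y⟫)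
    (hadj : ∀ t : ℝ, 0 ≤ t → ∀ x y : E, ⟪s t x, y⟫ = ⟪x, sa t y⟫) :
    ortho A (closure (⋃ t ∈ Set.Ici (0 : ℝ), ortho A (Set.range (s t)))) =
      ⋂ t ∈ Set.Ici (0 : ℝ), Set.range (s t) :=
  orthocomplement_of_pure_part_is_unitary_part_general s sa hiso hadj
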